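/- Witness completeness for backward simulation: for any set Σ and relations c, d, R, S on Σ, the backward simulation judgment c | d : R ⇐∃ S holds if and only if there exists a relation W on Σ×Σ that is b-valid, i.e. satisfying (WCb) W ; Ṡ ⊆ Ṙ ; W ; Ṡ, (WOb) ⟨c] ; Ṡ ⊆ [hav⟩ ; W, and (WUb) W ; Ṡ ⊆ ⟨hav | d⟩. -/

import Mathlib

/-! The canonical witness is `Ṙ ; ⟨hav|d⟩`, relating `(σ, σ')` with `R σ σ'` to every pair whose
right component `d` reaches from `σ'`; for it, (WOb) is exactly the simulation judgment. Conversely,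
given `c σ τ` and `S τ τ'`, (WOb) supplies a `W`-predecessor `(σ, σ')` of `(τ, τ')`, (WCb) forces
`R σ σ'` and (WUb) forces `d σ' τ'`. -/

namespace BiKAT

variable {S : Type*}

/-- Relational composition: (A ; B) x z iff ∃ y, A x y ∧ B y z. -/
def rcomp {α : Type*} (A B : α → α → Prop) : α → α → Prop :=
  fun x z => ∃ y, A x y ∧ B y z

/-- Union of relations. -/
def runion {α : Type*} (A B : α → α → Prop) : α → α → Prop :=
  fun x z => A x z ∨ B x z

/-- Reflexive-transitive closure. -/
def rstar {α : Type*} (A : α → α → Prop) : α → α → Prop :=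
  Relation.ReflTransGen A

/-- Inclusion of relations, pointwise implication. -/
def rincl {α : Type*} (A B : α → α → Prop) : Prop := ∀ x y, A x y → B x y

/-- Test: sub-identity relation of a set. -/
def test (e : Set S) : S → S → Prop := fun x y => x ∈ e ∧ y = x

/-- Left embedding ⟨c]. -/
def lemb (c : S → S → Prop) : S × S → S × S → Prop :=
  fun p q => c p.1 q.1 ∧ p.2 = q.2

/-- Right embedding [c⟩. -/
def remb (c : S → S → Prop) : S × S → S × S → Prop :=
  fun p q => c p.2 q.2 ∧ p.1 = q.1

/-- Two-argument embedding ⟨c|d⟩ := ⟨c] ; [d⟩. -/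
def emb2 (c d : S → S → Prop) : S × S → S × S → Prop :=
  rcomp (lemb c) (remb d)

/-- Bitest Ṙ: sub-identity relation on Σ×Σ for a relation R on Σ. -/
def bitest (R : S → S → Prop) : S × S → S × S → Prop :=
  fun p q => R p.1 p.2 ∧ q.1 = p.1 ∧ q.2 = p.2

/-- Havoc: the full relation. -/
def hav : S → S → Prop := fun _ _ => True

/-- while e do c := ([e];c)* ; [¬e]. -/
def wh (e : Set S) (c : S → S → Prop) : S → S → Prop :=
  rcomp (rstar (rcomp (test e) c)) (test eᶜ)

/-- The ∀∀ judgment c | d : R ≈> Sp. -/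
def allall (c d R Sp : S → S → Prop) : Prop :=
  ∀ σ σ' τ τ', R σ σ' → c σ τ → d σ' τ' → Sp τ τ'

/-- Forward simulation judgment c | d : R ⇒∃ Sp. -/
def fsim (c d R Sp : S → S → Prop) : Prop :=
  ∀ σ σ' τ, R σ σ' → c σ τ → ∃ τ', d σ' τ' ∧ Sp τ τ'

/-- Backward simulation judgment c | d : R ⇐∃ Sp. -/
def bsim (c d R Sp : S → S → Prop) : Prop :=
  ∀ σ τ τ', c σ τ → Sp τ τ' → ∃ σ', R σ σ' ∧ d σ' τ'

/-- Triple (componentwise) embedding ⟪a|b|c⟫ on Σ×Σ×Σ. -/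
def tri (a b c : S → S → Prop) : S × S × S → S × S × S → Prop :=
  fun p q => a p.1 q.1 ∧ b p.2.1 q.2.1 ∧ c p.2.2 q.2.2

/-- ⟦A ∥ B⟧: pairs of BiKAT elements agreeing on the middle execution. -/
def tpair (A B : S × S → S × S → Prop) : S × S × S → S × S × S → Prop :=
  fun p q => A (p.1, p.2.1) (q.1, q.2.1) ∧ B (p.2.1, p.2.2) (q.2.1, q.2.2)

/-- ⇙X: projection to the left two of three. -/
def proj2 (X : S × S × S → S × S × S → Prop) : S × S → S × S → Prop :=
  fun p q => ∃ s t, X (p.1, p.2, s) (q.1, q.2, t)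

end BiKAT

namespace BiKAT

variable {S : Type*}

section Lemmas

variable {A : S × S → S × S → Prop} {R d : S → S → Prop} {p q : S × S}

@[simp]
theorem rcomp_bitest_left_iff : rcomp (bitest R) A p q ↔ R p.1 p.2 ∧ A p q := by
  constructor
  · rintro ⟨r, ⟨hR, h1, h2⟩, hA⟩
    obtain rfl : r = p := Prod.ext h1 h2
    exact ⟨hR, hA⟩
  · rintro ⟨hR, hA⟩
    exact ⟨p, ⟨hR, rfl, rfl⟩, hA⟩

@[simp]
theorem rcomp_bitest_right_iff : rcomp A (bitest R) p q ↔ A p q ∧ R q.1 q.2 := by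
  constructor
  · rintro ⟨r, hA, hR, h1, h2⟩
    obtain rfl : q = r := Prod.ext h1 h2
    exact ⟨hA, hR⟩
  · rintro ⟨hA, hR⟩
    exact ⟨q, hA, hR, rfl, rfl⟩

@[simp]
theorem remb_hav_iff : remb hav p q ↔ p.1 = q.1 := by
  simp [remb, hav]

@[simp]
theorem emb2_hav_iff : emb2 hav d p q ↔ d p.2 q.2 := by
  constructor
  · rintro ⟨r, ⟨-, h2⟩, hd, -⟩
    rwa [h2]
  · intro hd
    exact ⟨(q.1, p.2), ⟨trivial, rfl⟩, hd, rfl⟩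

end Lemmas

/-- b-validity of a witness: the conditions (WCb), (WOb), (WUb). -/
def BValid (c d R Sp : S → S → Prop) (W : S × S → S × S → Prop) : Prop :=
  rincl (rcomp W (bitest Sp)) (rcomp (rcomp (bitest R) W) (bitest Sp)) ∧
    rincl (rcomp (lemb c) (bitest Sp)) (rcomp (remb hav) W) ∧
    rincl (rcomp W (bitest Sp)) (emb2 hav d)

def bsimWitness (R d : S → S → Prop) : S × S → S × S → Prop :=
  rcomp (bitest R) (emb2 hav d)

variable {c d R Sp : S → S → Prop} {W : S × S → S × S → Prop}

theorem bsimWitness_iff {p q : S × S} : bsimWitness R d p q ↔ R p.1 p.2 ∧ d p.2 q.2 := by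
  simp [bsimWitness]

theorem bValid_bsimWitness (h : bsim c d R Sp) : BValid c d R Sp (bsimWitness R d) := by
  refine ⟨?_, ?_, ?_⟩
  · rintro p q hW
    simp only [rcomp_bitest_right_iff, rcomp_bitest_left_iff, bsimWitness_iff] at hW ⊢
    exact ⟨⟨hW.1.1, hW.1⟩, hW.2⟩
  · rintro ⟨σ, τ'⟩ ⟨τ, τ''⟩ hc
    obtain ⟨⟨hστ, rfl⟩, hS⟩ := rcomp_bitest_right_iff.1 hc
    obtain ⟨σ', hR, hd⟩ := h σ τ τ' hστ hS
    exact ⟨(σ, σ'), ⟨trivial, rfl⟩, bsimWitness_iff.2 ⟨hR, hd⟩⟩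
  · rintro p q hW
    simp only [rcomp_bitest_right_iff, bsimWitness_iff, emb2_hav_iff] at hW ⊢
    exact hW.1.2

namespace BValid

theorem exists_pred (h : BValid c d R Sp W) {σ τ τ' : S} (hc : c σ τ) (hS : Sp τ τ') :
    ∃ σ', W (σ, σ') (τ, τ') := by
  obtain ⟨⟨σ₀, σ'⟩, hσ, hW⟩ :=
    h.2.1 (σ, τ') (τ, τ') (rcomp_bitest_right_iff.2 ⟨⟨hc, rfl⟩, hS⟩)
  obtain rfl : σ = σ₀ := remb_hav_iff.1 hσ
  exact ⟨σ', hW⟩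

theorem pre_rel_of_apply (h : BValid c d R Sp W) {p q : S × S} (hW : W p q) (hS : Sp q.1 q.2) :
    R p.1 p.2 :=
  (rcomp_bitest_left_iff.1 (rcomp_bitest_right_iff.1
    (h.1 p q (rcomp_bitest_right_iff.2 ⟨hW, hS⟩))).1).1

theorem right_step_of_apply (h : BValid c d R Sp W) {p q : S × S} (hW : W p q) (hS : Sp q.1 q.2) :
    d p.2 q.2 :=
  emb2_hav_iff.1 (h.2.2 p q (rcomp_bitest_right_iff.2 ⟨hW, hS⟩))

theorem bsim (h : BValid c d R Sp W) : bsim c d R Sp := by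
  intro σ τ τ' hc hS
  obtain ⟨σ', hW⟩ := h.exists_pred hc hS
  exact ⟨σ', h.pre_rel_of_apply hW hS, h.right_step_of_apply hW hS⟩

end BValid

theorem bsim_iff_exists_bValid : bsim c d R Sp ↔ ∃ W, BValid c d R Sp W :=
  ⟨fun h => ⟨bsimWitness R d, bValid_bsimWitness h⟩, fun ⟨_, hW⟩ => hW.bsim⟩

end BiKAT

open BiKAT

/-- Witness completeness for backward simulation. -/
theorem stmt16 (S : Type*) (c d R Sp : S → S → Prop) :
    bsim c d R Sp ↔
      ∃ W : S × S → S × S → Prop,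
        rincl (rcomp W (bitest Sp)) (rcomp (rcomp (bitest R) W) (bitest Sp)) ∧
        rincl (rcomp (lemb c) (bitest Sp)) (rcomp (remb hav) W) ∧
        rincl (rcomp W (bitest Sp)) (emb2 hav d) :=
  bsim_iff_exists_bValid
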